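/- arXiv:2309.10203 — 2 statements merged into one kernel-verified Lean document; each statement's English description precedes it below -/
import Mathlib

section
/- For any linear order ≺ on the set of indecomposable permutations, call a permutation π a Lyndon permutation with respect to ≺ if the word of its indecomposable blocks is a Lyndon word over the alphabet of indecomposable permutations ordered by ≺. Then for every k, the number of Lyndon permutations with respect to ≺ of size at least 2 and at most k is the same for all choices of the linear order ≺. -/
open Equiv MeasureTheory

/-- A permutation of size `n` together with its size. -/
abbrev PermSig := Σ n : ℕ, Equiv.Perm (Fin n)

/-- The direct sum of two permutations. -/
def permDirectSum {m n : ℕ} (π₁ : Equiv.Perm (Fin m)) (π₂ : Equiv.Perm (Fin n)) :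
    Equiv.Perm (Fin (m + n)) :=
  Equiv.permCongr finSumFinEquiv (Equiv.sumCongr π₁ π₂)

def sigSum (p q : PermSig) : PermSig := ⟨p.1 + q.1, permDirectSum p.2 q.2⟩

/-- Direct sum of a list of permutations. -/
def sigSumList : List PermSig → PermSig
  | [] => ⟨0, 1⟩
  | [p] => p
  | p :: q :: l => sigSum p (sigSumList (q :: l))

/-- A permutation is decomposable if it is a direct sum of two permutations
(each of size at least `1`). -/
def IsDecomposable {n : ℕ} (π : Equiv.Perm (Fin n)) : Prop :=
  ∃ (a b : ℕ) (_ : 0 < a) (_ : 0 < b) (h : a + b = n)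
    (π₁ : Equiv.Perm (Fin a)) (π₂ : Equiv.Perm (Fin b)),
    π = Equiv.permCongr (finCongr h) (permDirectSum π₁ π₂)

def IsIndecomposable {n : ℕ} (π : Equiv.Perm (Fin n)) : Prop :=
  1 ≤ n ∧ ¬ IsDecomposable π

/-- The alphabet `Σ` of indecomposable permutations. -/
def Indec : Type := {p : PermSig // IsIndecomposable p.2}

/-- `l` is the word of indecomposable blocks of `π`. -/
def IsBlockDecomposition {n : ℕ} (π : Equiv.Perm (Fin n)) (l : List Indec) : Prop :=
  sigSumList (l.map Subtype.val) = ⟨n, π⟩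

/-- The sequence of values of a permutation. -/
def permWord {n : ℕ} (π : Equiv.Perm (Fin n)) : List ℕ :=
  (List.finRange n).map fun i => (π i : ℕ)

/-- The order on the alphabet of indecomposable permutations: smaller sizes first,
permutations of the same size ordered lexicographically as sequences of values. -/
def sigLt (p q : PermSig) : Prop :=
  p.1 < q.1 ∨ (p.1 = q.1 ∧ List.Lex (· < ·) (permWord p.2) (permWord q.2))

def indecLt (p q : Indec) : Prop := sigLt p.1 q.1

/-- A nonempty word is Lyndon if no proper nonempty suffix of it is smaller
(w.r.t. the lexicographic order induced by `r`) than the word itself. -/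
def IsLyndonWord {α : Type*} (r : α → α → Prop) (w : List α) : Prop :=
  w ≠ [] ∧ ∀ i, 0 < i → i < w.length → ¬ List.Lex r (w.drop i) w

/-- A permutation is Lyndon w.r.t. an order `r` on indecomposable permutations
if its word of indecomposable blocks is a Lyndon word. -/
def IsLyndonPermWrt (r : Indec → Indec → Prop) {n : ℕ} (π : Equiv.Perm (Fin n)) : Prop :=
  ∃ l : List Indec, IsBlockDecomposition π l ∧ IsLyndonWord r l

def IsLyndonPerm {n : ℕ} (π : Equiv.Perm (Fin n)) : Prop := IsLyndonPermWrt indecLt π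

/-- `π <_L π'`: the word of blocks of `π` is lexicographically smaller than that of `π'`. -/
def permLtL (p q : PermSig) : Prop :=
  ∃ lp lq : List Indec, IsBlockDecomposition p.2 lp ∧ IsBlockDecomposition q.2 lq ∧
    List.Lex indecLt lp lq

def permLeL (p q : PermSig) : Prop :=
  ∃ lp lq : List Indec, IsBlockDecomposition p.2 lp ∧ IsBlockDecomposition q.2 lq ∧
    (lp = lq ∨ List.Lex indecLt lp lq)

/-- The pattern induced by the set `S` in `σ` is `τ`. -/
def IsPatternOf {N m : ℕ} (σ : Equiv.Perm (Fin N)) (S : Finset (Fin N))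
    (τ : Equiv.Perm (Fin m)) : Prop :=
  ∃ h : S.card = m, ∀ i j : Fin m,
    τ i < τ j ↔ σ (S.orderEmbOfFin h i) < σ (S.orderEmbOfFin h j)

/-- A permuton is a Borel probability measure on `[0,1]²` with uniform marginals. -/
structure Permuton where
  μ : Measure (ℝ × ℝ)
  prob : IsProbabilityMeasure μ
  marg_fst : ∀ a b : ℝ, 0 ≤ a → a ≤ b → b ≤ 1 →
    μ (Set.Icc a b ×ˢ Set.Icc (0:ℝ) 1) = ENNReal.ofReal (b - a)
  marg_snd : ∀ a b : ℝ, 0 ≤ a → a ≤ b → b ≤ 1 →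
    μ (Set.Icc (0:ℝ) 1 ×ˢ Set.Icc a b) = ENNReal.ofReal (b - a)

/-- The density of a pattern `σ` in a permuton `P`: the probability that `n` points
sampled independently from `P`, sorted by their first coordinates, have their second
coordinates ordered according to `σ`. -/
noncomputable def permutonDensity {n : ℕ} (σ : Equiv.Perm (Fin n)) (P : Permuton) : ℝ :=
  haveI := P.prob
  ((Measure.pi fun _ : Fin n => P.μ)
    {p : Fin n → ℝ × ℝ | ∃ e : Equiv.Perm (Fin n),
      (∀ i j : Fin n, i < j → (p (e i)).1 < (p (e j)).1) ∧
      (∀ i j : Fin n, σ i < σ j ↔ (p (e i)).2 < (p (e j)).2)}).toReal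

/-!
For every strict total order, a word is Lyndon iff it is strictly smaller than all its
nontrivial rotations. Such a word is primitive, and conversely the least rotation of a primitive
word is Lyndon; so for every order the Lyndon words form a system of representatives of the
primitive necklaces (`Cycle`s). Their number, with any rotation-invariant constraint such as the
total size, is therefore independent of the order.

On the permutation side, the word of indecomposable blocks is unique: the size of the first block
of a direct sum is its least positive cut (an initial segment mapped onto itself), because an
indecomposable permutation has no proper cut. Hence Lyndon permutations of size `n` are in
bijection with Lyndon words of total size `n`.
-/

namespace List

variable {α : Type*} {r : α → α → Prop}

theorem Lex.append_of_not_isPrefix {s w : List α} (h : Lex r s w) (hs : ¬ s <+: w)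
    (a b : List α) : Lex r (s ++ a) (w ++ b) := by
  induction h with
  | nil => exact absurd nil_prefix hs
  | cons _ ih => exact Lex.cons (ih fun hp => hs (cons_prefix_cons.2 ⟨rfl, hp⟩))
  | rel hab => exact Lex.rel hab

theorem Lex.of_append_left [Std.Irrefl r] :
    ∀ (s : List α) {t₁ t₂ : List α}, Lex r (s ++ t₁) (s ++ t₂) → Lex r t₁ t₂
  | [], _, _, h => h
  | _ :: s, _, _, h => Lex.of_append_left s (lex_cons_iff.1 h)

instance Lex.isStrictTotalOrder [IsStrictTotalOrder α r] :
    IsStrictTotalOrder (List α) (Lex r) :=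
  { isStrictWeakOrder_of_isOrderConnected with }

theorem IsRotated.rotate_eq_self {u w : List α} (h : u ~r w) {i : ℕ} (hu : u.rotate i = u) :
    w.rotate i = w := by
  obtain ⟨m, rfl⟩ := h
  rw [rotate_rotate, Nat.add_comm, ← rotate_rotate, hu]

theorem IsRotated.exists_rotate_of_ne {u w : List α} (h : u ~r w) (hne : u ≠ w) :
    ∃ i, 0 < i ∧ i < u.length ∧ u.rotate i = w := by
  obtain ⟨m, rfl⟩ := h
  refine ⟨m % u.length, Nat.pos_of_ne_zero fun h0 => hne ?_, Nat.mod_lt _ ?_, rotate_mod _ _⟩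
  · rw [← rotate_mod, h0, rotate_zero]
  · exact length_pos_iff.2 fun h0 => hne (by simp [h0])

end List

section Lyndon

open List

variable {α : Type*} {r r' : α → α → Prop} [IsStrictTotalOrder α r] {w : List α}

theorem IsLyndonWord.lex_rotate (hw : IsLyndonWord r w) {i : ℕ} (h0 : 0 < i)
    (hi : i < w.length) : Lex r w (w.rotate i) := by
  rw [rotate_eq_drop_append_take hi.le]
  refine Lex.append_right r _ ?_
  rcases trichotomous_of (Lex r) w (w.drop i) with h | h | h
  · exact h
  · exact absurd (congrArg length h) (by simp; omega)
  · exact absurd h (hw.2 i h0 hi)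

/-- A proper suffix `s` of `w = p ++ s` smaller than `w` is either a prefix of `w`, and then
`w = s ++ t` has the rotation `t ++ s < w`, or it is not, and then already `s ++ p < w`. -/
theorem isLyndonWord_of_lex_rotate (hne : w ≠ [])
    (h : ∀ i, 0 < i → i < w.length → Lex r w (w.rotate i)) : IsLyndonWord r w := by
  refine ⟨hne, fun i h0 hi hlex => ?_⟩
  have hrot : Lex r w (w.drop i ++ w.take i) := rotate_eq_drop_append_take hi.le ▸ h i h0 hi
  by_cases hpre : w.drop i <+: w
  · obtain ⟨t, hst⟩ := hpre
    have hlen : t.length = (w.take i).length := by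
      have := congrArg length hst
      simp at this ⊢
      omega
    have htp : Lex r t (w.take i) := Lex.of_append_left (w.drop i) (by rwa [hst])
    have hts : Lex r (t ++ w.drop i) w := by
      have := htp.append_of_not_isPrefix
        (fun hp => irrefl_of (Lex r) t (hp.eq_of_length hlen ▸ htp)) (w.drop i) (w.drop i)
      rwa [take_append_drop] at this
    have hsw : Lex r w (t ++ w.drop i) := by
      rw [← rotate_append_length_eq (w.drop i) t, hst]
      exact h _ (by simp; omega) (by simp; omega)
    exact asymm_of (Lex r) hsw hts
  · exact asymm_of (Lex r) hrot (by simpa using hlex.append_of_not_isPrefix hpre (w.take i) [])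

theorem IsLyndonWord.rotate_ne_self (hw : IsLyndonWord r w) {i : ℕ} (h0 : 0 < i)
    (hi : i < w.length) : w.rotate i ≠ w := fun h =>
  irrefl_of (Lex r) w (by simpa only [h] using hw.lex_rotate h0 hi)

theorem IsLyndonWord.lex_of_isRotated {u : List α} (hw : IsLyndonWord r w) (h : w ~r u)
    (hne : w ≠ u) : Lex r w u := by
  obtain ⟨i, h0, hi, rfl⟩ := h.exists_rotate_of_ne hne
  exact hw.lex_rotate h0 hi

theorem IsLyndonWord.eq_of_isRotated {u : List α} (hw : IsLyndonWord r w)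
    (hu : IsLyndonWord r u) (h : w ~r u) : w = u := by
  by_contra hne
  exact asymm_of (Lex r) (hw.lex_of_isRotated h hne) (hu.lex_of_isRotated h.symm (Ne.symm hne))

/-- The `r'`-least rotation of a word which is Lyndon for `r` is Lyndon for `r'`: it is
strictly below its other rotations because these differ from it, `w` being primitive. -/
theorem IsLyndonWord.exists_isRotated [IsStrictTotalOrder α r'] (hw : IsLyndonWord r w) :
    ∃ u, w ~r u ∧ IsLyndonWord r' u := by
  have hfin : {u | u ∈ w.cyclicPermutations}.Finite := List.finite_toSet _
  obtain ⟨⟨u, hu⟩, -, hmin⟩ := (hfin.wellFoundedOn (r := Lex r')).has_min Set.univ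
    ⟨⟨w, mem_cyclicPermutations_iff.2 (IsRotated.refl w)⟩, trivial⟩
  have hwu : w ~r u := (mem_cyclicPermutations_iff.1 hu).symm
  have hlen : u.length = w.length := hwu.perm.length_eq.symm
  refine ⟨u, hwu, isLyndonWord_of_lex_rotate
    (ne_nil_of_length_pos (hlen ▸ length_pos_iff.2 hw.1)) fun i h0 hi => ?_⟩
  have hne : u.rotate i ≠ u := fun he =>
    hw.rotate_ne_self h0 (hlen ▸ hi) (hwu.symm.rotate_eq_self he)
  rcases trichotomous_of (Lex r') u (u.rotate i) with h | h | h
  · exact h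
  · exact absurd h.symm hne
  · have hrot : u.rotate i ∈ w.cyclicPermutations :=
      mem_cyclicPermutations_iff.2 ((IsRotated.forall u i).trans hwu.symm)
    exact absurd h (hmin ⟨u.rotate i, hrot⟩ trivial)

end Lyndon

section Necklaces

variable {α : Type*} (r r' : α → α → Prop) [IsStrictTotalOrder α r] [IsStrictTotalOrder α r']

theorem injOn_lyndonWord_coe_cycle :
    Set.InjOn (fun w : List α => (w : Cycle α)) {w | IsLyndonWord r w} := fun _ hu _ hw h =>
  hu.eq_of_isRotated hw (Cycle.coe_eq_coe.1 h)

theorem image_lyndonWord_coe_cycle_subset {Q : List α → Prop}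
    (hQ : ∀ ⦃u w : List α⦄, u ~r w → Q u → Q w) :
    (fun w : List α => (w : Cycle α)) '' {w | IsLyndonWord r w ∧ Q w} ⊆
      (fun w : List α => (w : Cycle α)) '' {w | IsLyndonWord r' w ∧ Q w} := by
  rintro _ ⟨w, ⟨hw, hQw⟩, rfl⟩
  obtain ⟨u, hwu, hu⟩ := hw.exists_isRotated (r' := r')
  exact ⟨u, ⟨hu, hQ hwu hQw⟩, Cycle.coe_eq_coe.2 hwu.symm⟩

theorem card_lyndonWord_eq {Q : List α → Prop} (hQ : ∀ ⦃u w : List α⦄, u ~r w → Q u → Q w) :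
    Nat.card {w | IsLyndonWord r w ∧ Q w} = Nat.card {w | IsLyndonWord r' w ∧ Q w} := by
  rw [← Nat.card_image_of_injOn ((injOn_lyndonWord_coe_cycle r).mono fun _ h => h.1),
    ← Nat.card_image_of_injOn ((injOn_lyndonWord_coe_cycle r').mono fun _ h => h.1),
    (image_lyndonWord_coe_cycle_subset r r' hQ).antisymm
      (image_lyndonWord_coe_cycle_subset r' r hQ)]

end Necklaces

section DirectSum

variable {m n : ℕ}

theorem permDirectSum_castAdd (π₁ : Perm (Fin m)) (π₂ : Perm (Fin n)) (i : Fin m) :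
    permDirectSum π₁ π₂ (Fin.castAdd n i) = Fin.castAdd n (π₁ i) := by
  simp [permDirectSum, Equiv.permCongr_apply, ← finSumFinEquiv_apply_left]

theorem permDirectSum_injective {π₁ σ₁ : Perm (Fin m)} {π₂ σ₂ : Perm (Fin n)}
    (h : permDirectSum π₁ π₂ = permDirectSum σ₁ σ₂) : π₁ = σ₁ ∧ π₂ = σ₂ :=
  Prod.ext_iff.1 <| Perm.sumCongrHom_injective (α := Fin m) (β := Fin n) (a₁ := (π₁, π₂))
    (a₂ := (σ₁, σ₂)) ((permCongr finSumFinEquiv).injective h)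

def IsCut (π : Perm (Fin n)) (m : ℕ) : Prop :=
  ∀ i : Fin n, (i : ℕ) < m → (π i : ℕ) < m

theorem isCut_permDirectSum (π₁ : Perm (Fin m)) (π₂ : Perm (Fin n)) :
    IsCut (permDirectSum π₁ π₂) m := fun i hi => by
  rw [show i = Fin.castAdd n ⟨i, hi⟩ from rfl, permDirectSum_castAdd]
  exact (π₁ _).isLt

theorem IsCut.of_permDirectSum {π₁ : Perm (Fin m)} {π₂ : Perm (Fin n)} {k : ℕ}
    (h : IsCut (permDirectSum π₁ π₂) k) : IsCut π₁ k := fun i hi => by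
  simpa [permDirectSum_castAdd] using h (Fin.castAdd n i) hi

theorem isDecomposable_of_isCut {π : Perm (Fin n)} (h0 : 0 < m) (hm : m < n) (h : IsCut π m) :
    IsDecomposable π := by
  have hmn : m + (n - m) = n := by omega
  set e : Fin m ⊕ Fin (n - m) ≃ Fin n := finSumFinEquiv.trans (finCongr hmn)
  obtain ⟨⟨π₁, π₂⟩, hσ⟩ := Perm.mem_sumCongrHom_range_of_perm_mapsTo_inl
    (σ := e.symm.permCongr π) <| by
      rintro _ ⟨i, rfl⟩
      refine ⟨⟨π (e (.inl i)), h _ (by simp [e])⟩, (e.symm_apply_eq.2 (Fin.ext ?_)).symm⟩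
      simp [e]
  refine ⟨m, n - m, h0, by omega, hmn, π₁, π₂, ?_⟩
  calc π = e.permCongr (e.symm.permCongr π) := (e.permCongr.apply_symm_apply π).symm
    _ = e.permCongr (Perm.sumCongr π₁ π₂) := by rw [← hσ]; rfl
    _ = _ := rfl

theorem IsIndecomposable.not_isCut {π : Perm (Fin n)} (hπ : IsIndecomposable π) (h0 : 0 < m)
    (hm : m < n) : ¬ IsCut π m := fun h => hπ.2 (isDecomposable_of_isCut h0 hm h)

end DirectSum

theorem eq_and_eq_of_sigSum_eq {p q p' q' : PermSig} (hfst : p.1 = p'.1)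
    (h : sigSum p q = sigSum p' q') : p = p' ∧ q = q' := by
  obtain ⟨a, π₁⟩ := p
  obtain ⟨b, π₂⟩ := q
  obtain ⟨a', σ₁⟩ := p'
  obtain ⟨b', σ₂⟩ := q'
  obtain rfl : a = a' := hfst
  obtain rfl : b = b' := Nat.add_left_cancel (congrArg Sigma.fst h)
  obtain ⟨rfl, rfl⟩ := permDirectSum_injective (eq_of_heq (Sigma.mk.inj_iff.1 h).2)
  exact ⟨rfl, rfl⟩

theorem sigSum_zero (p : PermSig) : sigSum p ⟨0, 1⟩ = p :=
  Sigma.ext rfl (heq_of_eq (Equiv.ext (permDirectSum_castAdd p.2 1)))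

theorem sigSumList_cons (p : PermSig) (L : List PermSig) :
    sigSumList (p :: L) = sigSum p (sigSumList L) := by
  cases L with
  | nil => exact (sigSum_zero p).symm
  | cons => rfl

def blockSum (l : List Indec) : PermSig := sigSumList (l.map Subtype.val)

theorem blockSum_cons (x : Indec) (l : List Indec) :
    blockSum (x :: l) = sigSum x.1 (blockSum l) :=
  sigSumList_cons _ _

theorem blockSum_fst (l : List Indec) : (blockSum l).1 = (l.map fun x => x.1.1).sum := by
  induction l with
  | nil => rfl
  | cons x l ih => rw [blockSum_cons, List.map_cons, List.sum_cons, ← ih]; rfl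

theorem blockSum_cons_ne_nil (x : Indec) (l : List Indec) : blockSum (x :: l) ≠ blockSum [] :=
  fun h => by
    have hsize := congrArg Sigma.fst h
    simp only [blockSum_fst, List.map_cons, List.sum_cons, List.map_nil, List.sum_nil] at hsize
    have := x.2.1
    omega

/-- A first block `y` shorter than `x` would give `x` the proper cut `y.1.1`. -/
theorem fst_le_of_sigSum_eq {x y : Indec} {p q : PermSig} (h : sigSum x.1 p = sigSum y.1 q) :
    x.1.1 ≤ y.1.1 := by
  by_contra! hlt
  have hcut : IsCut (sigSum y.1 q).2 y.1.1 := isCut_permDirectSum _ _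
  rw [← h] at hcut
  exact x.2.not_isCut y.2.1 hlt hcut.of_permDirectSum

theorem blockSum_injective : Function.Injective blockSum := by
  intro l
  induction l with
  | nil =>
    rintro (_ | ⟨y, l'⟩) h
    · rfl
    · exact absurd h.symm (blockSum_cons_ne_nil y l')
  | cons x l ih =>
    rintro (_ | ⟨y, l'⟩) h
    · exact absurd h (blockSum_cons_ne_nil x l)
    · rw [blockSum_cons, blockSum_cons] at h
      have hsize := le_antisymm (fst_le_of_sigSum_eq h) (fst_le_of_sigSum_eq h.symm)
      obtain ⟨hxy, hl⟩ := eq_and_eq_of_sigSum_eq hsize h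
      rw [Subtype.ext hxy, ih hl]

theorem blockSum_fst_eq_of_isRotated {l l' : List Indec} (h : l ~r l') :
    (blockSum l).1 = (blockSum l').1 := by
  rw [blockSum_fst, blockSum_fst, (h.perm.map _).sum_eq]

theorem setOf_lyndonPerm_eq_image (r : Indec → Indec → Prop) (P : ℕ → Prop) :
    {p : PermSig | P p.1 ∧ IsLyndonPermWrt r p.2} =
      blockSum '' {l | IsLyndonWord r l ∧ P (blockSum l).1} := by
  ext p
  constructor
  · rintro ⟨hP, l, hl : blockSum l = p, hlyn⟩
    exact ⟨l, ⟨hlyn, hl ▸ hP⟩, hl⟩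
  · rintro ⟨l, ⟨hlyn, hP⟩, rfl⟩
    exact ⟨hP, l, rfl, hlyn⟩

theorem card_lyndonPerm_eq (r r' : Indec → Indec → Prop) [IsStrictTotalOrder Indec r]
    [IsStrictTotalOrder Indec r'] (P : ℕ → Prop) :
    Nat.card {p : PermSig // P p.1 ∧ IsLyndonPermWrt r p.2} =
      Nat.card {p : PermSig // P p.1 ∧ IsLyndonPermWrt r' p.2} := by
  change Nat.card {p : PermSig | P p.1 ∧ IsLyndonPermWrt r p.2} =
    Nat.card {p : PermSig | P p.1 ∧ IsLyndonPermWrt r' p.2}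
  rw [setOf_lyndonPerm_eq_image, setOf_lyndonPerm_eq_image,
    Nat.card_image_of_injective blockSum_injective, Nat.card_image_of_injective blockSum_injective]
  exact card_lyndonWord_eq r r' fun u w h hu => by rwa [← blockSum_fst_eq_of_isRotated h]

/-- The number of Lyndon permutations of size at least `2` and at most `k` does not
depend on the choice of the linear order on the alphabet of indecomposable permutations. -/
theorem card_lyndon_independent_of_order (r r' : Indec → Indec → Prop)
    (hr : IsStrictTotalOrder Indec r) (hr' : IsStrictTotalOrder Indec r') (k : ℕ) :
    Nat.card {p : PermSig // 2 ≤ p.1 ∧ p.1 ≤ k ∧ IsLyndonPermWrt r p.2}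
      = Nat.card {p : PermSig // 2 ≤ p.1 ∧ p.1 ≤ k ∧ IsLyndonPermWrt r' p.2} := by
  simpa only [and_assoc] using card_lyndonPerm_eq r r' fun n => 2 ≤ n ∧ n ≤ k
end

section
/- Every nonempty word over a linearly ordered alphabet can be expressed as a concatenation w₁w₂⋯wₙ of Lyndon words with w₁ ⪰ w₂ ⪰ ⋯ ⪰ wₙ in the lexicographic order, and this expression is unique. -/
namespace List

theorem append_lt_append_of_lt_of_not_isPrefix {α : Type*} [LT α] {x y : List α} (hxy : x < y)
    (hp : ¬x <+: y) (s t : List α) : x ++ s < y ++ t := by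
  induction x generalizing y with
  | nil => exact absurd nil_prefix hp
  | cons a x ih =>
    cases hxy with
    | cons h => exact Lex.cons (ih h fun hc => hp (cons_prefix_cons.mpr ⟨rfl, hc⟩))
    | rel h => exact Lex.rel h

theorem exists_mem_isPrefix_isSuffix_of_isPrefix_flatten {α : Type*} {l : List (List α)}
    {q : List α} (hq : q ≠ []) (h : q <+: l.flatten) :
    ∃ x ∈ l, ∃ q', q' ≠ [] ∧ q' <+: x ∧ q' <:+ q := by
  induction l generalizing q with
  | nil => exact absurd (prefix_nil.mp h) hq
  | cons x l ih =>
    rw [flatten_cons] at h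
    rcases prefix_or_prefix_of_prefix h (prefix_append x l.flatten) with hqx | ⟨r, rfl⟩
    · exact ⟨x, mem_cons_self, q, hq, hqx, suffix_refl q⟩
    · rcases eq_or_ne r [] with rfl | hr
      · exact ⟨x, mem_cons_self, x, by simpa using hq, prefix_refl x, by simp⟩
      · obtain ⟨y, hy, q', hq', hpre, hsuf⟩ := ih hr ((prefix_append_right_inj x).mp h)
        exact ⟨y, mem_cons_of_mem x hy, q', hq', hpre, hsuf.trans (suffix_append x r)⟩

end List

namespace IsLyndonWord

variable {α : Type*} [LinearOrder α] {u v : List α}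

theorem ne_nil (hu : IsLyndonWord (· < ·) u) : u ≠ [] := hu.1

theorem lt_drop (hu : IsLyndonWord (· < ·) u) {i : ℕ} (hi : 0 < i) (hiu : i < u.length) :
    u < u.drop i := by
  refine lt_of_le_of_ne (not_lt.mp (hu.2 i hi hiu)) fun h => ?_
  have := congrArg List.length h
  simp only [List.length_drop] at this
  omega

theorem lt_of_isSuffix (hu : IsLyndonWord (· < ·) u) {s : List α} (hs : s <:+ u) (hs₀ : s ≠ [])
    (hsu : s.length < u.length) : u < s := by
  obtain ⟨r, rfl⟩ := hs
  have hr : 0 < r.length := by simpa using hsu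
  simpa using hu.lt_drop hr (by simpa using List.length_pos_iff.mpr hs₀)

theorem singleton (a : α) : IsLyndonWord (· < ·) [a] :=
  ⟨List.cons_ne_nil a [], fun i hi hil => by rw [List.length_singleton] at hil; omega⟩

theorem append_lt_right (hu : IsLyndonWord (· < ·) u) (hv : IsLyndonWord (· < ·) v) (h : u < v) :
    u ++ v < v := by
  by_cases hp : u <+: v
  · obtain ⟨z, rfl⟩ := hp
    have hz : z ≠ [] := by rintro rfl; simp at h
    have hzu : u ++ z < z := hv.lt_of_isSuffix (List.suffix_append u z) hz
      (by simpa using List.length_pos_iff.mpr hu.ne_nil)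
    exact List.append_left_lt hzu
  · simpa using List.append_lt_append_of_lt_of_not_isPrefix h hp v []

theorem append (hu : IsLyndonWord (· < ·) u) (hv : IsLyndonWord (· < ·) v) (h : u < v) :
    IsLyndonWord (· < ·) (u ++ v) := by
  refine ⟨by simp [hu.ne_nil], fun i hi hil hlt => ?_⟩
  rw [List.drop_append] at hlt
  rcases lt_or_ge i u.length with hiu | hui
  · rw [Nat.sub_eq_zero_of_le hiu.le, List.drop_zero] at hlt
    have hnp : ¬u <+: u.drop i := fun hc => by
      have := hc.length_le
      simp only [List.length_drop] at this
      omega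
    exact lt_asymm hlt (List.append_lt_append_of_lt_of_not_isPrefix (hu.lt_drop hi hiu) hnp v v)
  · rw [List.drop_eq_nil_of_le hui, List.nil_append] at hlt
    have hkey := append_lt_right hu hv h
    rcases Nat.eq_zero_or_pos (i - u.length) with hj | hj
    · rw [hj, List.drop_zero] at hlt
      exact lt_asymm hlt hkey
    · rw [List.length_append] at hil
      exact lt_asymm hlt (hkey.trans (hv.lt_drop hj (by omega)))

theorem length_le_of_isPrefix_append_flatten {p : List α} {l : List (List α)}
    (hp : IsLyndonWord (· < ·) p) (hu : u ≠ []) (hl : ∀ x ∈ l, x ≤ u)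
    (h : p <+: u ++ l.flatten) : p.length ≤ u.length := by
  by_contra! hlen
  obtain ⟨q, rfl⟩ : u <+: p := by
    rcases List.prefix_or_prefix_of_prefix h (List.prefix_append u l.flatten) with h' | h'
    · exact absurd h'.length_le (by omega)
    · exact h'
  have hq : q ≠ [] := by rintro rfl; simp at hlen
  obtain ⟨x, hx, q', hq', hq'x, hq'q⟩ :=
    List.exists_mem_isPrefix_isSuffix_of_isPrefix_flatten hq
      ((List.prefix_append_right_inj u).mp h)
  have hpq' : u ++ q < q' := hp.lt_of_isSuffix (hq'q.trans (List.suffix_append u q)) hq'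
    (by
      have := hq'q.length_le
      have := List.length_pos_iff.mpr hu
      simp only [List.length_append]
      omega)
  exact lt_irrefl _ <| calc
    u ++ q < q' := hpq'
    _ ≤ x := not_lt.mp hq'x.le
    _ ≤ u := hl x hx
    _ ≤ u ++ q := not_lt.mp (List.prefix_append u q).le

end IsLyndonWord

section Factorization

variable {α : Type*} [LinearOrder α]

def IsLyndonFactorization (l : List (List α)) : Prop :=
  (∀ u ∈ l, IsLyndonWord (· < ·) u) ∧ l.IsChain (· ≥ ·)

theorem IsLyndonFactorization.nil : IsLyndonFactorization ([] : List (List α)) :=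
  ⟨by simp, List.isChain_nil⟩

theorem IsLyndonFactorization.of_cons {u : List α} {l : List (List α)}
    (h : IsLyndonFactorization (u :: l)) : IsLyndonFactorization l :=
  ⟨fun v hv => h.1 v (List.mem_cons_of_mem u hv), h.2.tail⟩

theorem IsLyndonFactorization.le_head {u : List α} {l : List (List α)}
    (h : IsLyndonFactorization (u :: l)) : ∀ x ∈ l, x ≤ u :=
  fun _ hx => List.rel_of_pairwise_cons h.2.pairwise hx

theorem exists_isLyndonFactorization_flatten_eq_append {u : List α} {m : List (List α)}
    (hu : IsLyndonWord (· < ·) u) (hm : IsLyndonFactorization m) :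
    ∃ l, IsLyndonFactorization l ∧ l.flatten = u ++ m.flatten := by
  induction m generalizing u with
  | nil => exact ⟨[u], ⟨by simpa using hu, List.isChain_singleton u⟩, by simp⟩
  | cons v m ih =>
    by_cases huv : u < v
    · obtain ⟨l, hl, hflat⟩ := ih (hu.append (hm.1 v List.mem_cons_self) huv) hm.of_cons
      exact ⟨l, hl, by simp [hflat]⟩
    · refine ⟨u :: v :: m, ⟨?_, List.isChain_cons_cons.mpr ⟨not_lt.mp huv, hm.2⟩⟩, rfl⟩
      exact List.forall_mem_cons.mpr ⟨hu, hm.1⟩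

theorem exists_isLyndonFactorization (w : List α) :
    ∃ l, IsLyndonFactorization l ∧ l.flatten = w := by
  induction w with
  | nil => exact ⟨[], .nil, rfl⟩
  | cons a w ih =>
    obtain ⟨m, hm, rfl⟩ := ih
    exact exists_isLyndonFactorization_flatten_eq_append (IsLyndonWord.singleton a) hm

theorem IsLyndonFactorization.eq_of_flatten_eq {l m : List (List α)}
    (hl : IsLyndonFactorization l) (hm : IsLyndonFactorization m) (h : l.flatten = m.flatten) :
    l = m := by
  induction l generalizing m with
  | nil =>
    cases m with
    | nil => rfl
    | cons v m => simp [(hm.1 v List.mem_cons_self).ne_nil] at h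
  | cons u l ih =>
    cases m with
    | nil => simp [(hl.1 u List.mem_cons_self).ne_nil] at h
    | cons v m =>
      rw [List.flatten_cons, List.flatten_cons] at h
      have hu := hl.1 u List.mem_cons_self
      have hv := hm.1 v List.mem_cons_self
      have hvu : v.length ≤ u.length := hv.length_le_of_isPrefix_append_flatten hu.ne_nil
        hl.le_head (h ▸ List.prefix_append v m.flatten)
      have huv : u.length ≤ v.length := hu.length_le_of_isPrefix_append_flatten hv.ne_nil
        hm.le_head (h ▸ List.prefix_append u l.flatten)
      obtain ⟨rfl, htail⟩ := List.append_inj h (le_antisymm huv hvu)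
      rw [ih hl.of_cons hm.of_cons htail]

end Factorization

theorem lyndon_factorization_general {α : Type*} [LinearOrder α] (w : List α) :
    ∃! l : List (List α),
      (∀ u ∈ l, IsLyndonWord (· < · : α → α → Prop) u) ∧
      l.Chain' (fun u v => ¬ List.Lex (· < · : α → α → Prop) u v) ∧
      l.flatten = w := by
  have chain_iff (l : List (List α)) :
      l.IsChain (fun u v => ¬ List.Lex (· < ·) u v) ↔ l.IsChain (· ≥ ·) :=
    List.IsChain.iff fun _ _ => not_lt (α := List α)
  obtain ⟨l, hl, rfl⟩ := exists_isLyndonFactorization w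
  refine ⟨l, ⟨hl.1, (chain_iff l).mpr hl.2, rfl⟩, fun m ⟨hm, hmc, hflat⟩ => ?_⟩
  exact IsLyndonFactorization.eq_of_flatten_eq ⟨hm, (chain_iff m).mp hmc⟩ hl hflat

/-- Chen–Fox–Lyndon: every nonempty word over a linearly ordered alphabet has a unique
factorization into a lexicographically non-increasing sequence of Lyndon words. -/
theorem lyndon_factorization {α : Type*} [LinearOrder α] (w : List α) (hw : w ≠ []) :
    ∃! l : List (List α),
      (∀ u ∈ l, IsLyndonWord (· < · : α → α → Prop) u) ∧
      l.Chain' (fun u v => ¬ List.Lex (· < · : α → α → Prop) u v) ∧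
      l.flatten = w :=
  lyndon_factorization_general w
end
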